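/- Let P be a finite pure poset of length ℓ with minimum element 0̂ and rank function ρ, uniform with associated uniform sequence (P_0, …, P_ℓ), and let ϖ_P be a uniform P-compatible weight function with values in a commutative ring R, inducing a P_i-compatible weight function ϖ_{P_i} for each i. Then the (ℓ+1) × (ℓ+1) matrices [w_{i−j}(P_i, ϖ_{P_i})]_{0 ≤ i,j ≤ ℓ} and [W_{i−j}(P_i, ϖ_{P_i})]_{0 ≤ i,j ≤ ℓ} are inverses of each other over R. -/

import Mathlib

/-!
Over a commutative ring a one-sided inverse of a square matrix is two-sided, so it suffices to
show `[w] * [W] = 1`. Its `(i, j)` entry is `∑ₖ w_{i-k}(P_i) W_{k-j}(P_k)`. Every upper ideal of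
`P_i` is an upper ideal of `P`, so by uniformity `W_{k-j}(P_k)` is the Whitney number of the upper
ideal `I_a` for any `a ∈ P_i` of rank `i - k`. By multiplicativity of the weight the entry becomes
`∑_{ρ b = i - j} ϖ(0̂, b) ∑_{a ∈ [0̂, b]} μ̄(0̂, a)`, and the inner sum is `δ_{0̂ b}` by the
recursion defining the Möbius function.
-/

-- `mobiusAux r m a b` iterates the defining recursion of the Möbius function of
-- the relation `r` `m` times; for `m` at least the length of the interval
-- `[a,b]` this computes the Möbius function `μ̄(a,b)` of the poset.
open Classical in
noncomputable def mobiusAux {Q : Type*} (r : Q → Q → Prop) : ℕ → Q → Q → ℤ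
  | 0, a, b => if a = b then 1 else 0
  | m+1, a, b => if a = b then 1 else - ∑ᶠ c ∈ {c | r a c ∧ r c b ∧ c ≠ b}, mobiusAux r m a c

/-- the Möbius function `μ̄_Q(a,b)` of a finite poset `Q` -/
noncomputable def mobiusP (Q : Type*) [PartialOrder Q] [Fintype Q] (a b : Q) : ℤ :=
  mobiusAux (· ≤ ·) (Fintype.card Q) a b

/-- the weighted Whitney number of the first kind
`w_m(Q,ϖ) = Σ_{ρ(α) = m} μ̄_Q(0̂,α)·ϖ(0̂,α)` -/
noncomputable def wWhitney {R : Type*} [CommRing R]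
    (Q : Type*) [PartialOrder Q] [Fintype Q] [OrderBot Q]
    (ρ : Q → ℕ) (ϖ : Q → Q → R) (m : ℕ) : R :=
  ∑ᶠ a ∈ {a : Q | ρ a = m}, (mobiusP Q ⊥ a : ℤ) • ϖ ⊥ a

/-- the weighted Whitney number of the second kind `W_m(Q,ϖ) = Σ_{ρ(α) = m} ϖ(0̂,α)` -/
noncomputable def WWhitney {R : Type*} [CommRing R]
    (Q : Type*) [PartialOrder Q] [Fintype Q] [OrderBot Q]
    (ρ : Q → ℕ) (ϖ : Q → Q → R) (m : ℕ) : R :=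
  ∑ᶠ a ∈ {a : Q | ρ a = m}, ϖ ⊥ a

open Finset
open scoped Classical

section Mobius

variable {Q : Type*}

lemma mobiusAux_self (r : Q → Q → Prop) (m : ℕ) (a : Q) : mobiusAux r m a a = 1 := by
  cases m <;> simp [mobiusAux]

lemma finsum_mem_setOf_eq_sum_filter [Fintype Q] {M : Type*} [AddCommMonoid M]
    (p : Q → Prop) [DecidablePred p] (f : Q → M) :
    ∑ᶠ a ∈ {a | p a}, f a = ∑ a ∈ univ.filter p, f a := by
  rw [← finsum_mem_coe_finset]
  simp

lemma mobiusAux_succ [Fintype Q] (r : Q → Q → Prop) (m : ℕ) (a b : Q) :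
    mobiusAux r (m + 1) a b = if a = b then 1 else
      -∑ c ∈ univ.filter (fun c => r a c ∧ r c b ∧ c ≠ b), mobiusAux r m a c := by
  rw [mobiusAux, finsum_mem_setOf_eq_sum_filter]

variable [PartialOrder Q] [Fintype Q]

lemma mobiusAux_succ_eq_of_card_le {k : ℕ} {a b : Q}
    (h : #(univ.filter fun c => a ≤ c ∧ c ≤ b) ≤ k) :
    mobiusAux (· ≤ ·) (k + 1) a b = mobiusAux (· ≤ ·) k a b := by
  induction k generalizing b with
  | zero =>
    have hempty : univ.filter (fun c => a ≤ c ∧ c ≤ b ∧ c ≠ b) = ∅ := by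
      simp only [Nat.le_zero, card_eq_zero, filter_eq_empty_iff] at h
      exact filter_eq_empty_iff.mpr fun c _ hc => h (mem_univ c) ⟨hc.1, hc.2.1⟩
    rw [mobiusAux_succ, hempty, sum_empty, neg_zero]
    rfl
  | succ k ih =>
    rw [mobiusAux_succ, mobiusAux_succ]
    refine if_congr Iff.rfl rfl (congrArg _ (sum_congr rfl fun c hc => ih ?_))
    obtain ⟨hac, hcb, hne⟩ := (mem_filter.mp hc).2
    have hsub : univ.filter (fun d => a ≤ d ∧ d ≤ c) ⊂ univ.filter fun d => a ≤ d ∧ d ≤ b :=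
      (ssubset_iff_of_subset fun d hd => by
          simp only [mem_filter, mem_univ, true_and] at hd ⊢
          exact ⟨hd.1, hd.2.trans hcb⟩).mpr
        ⟨b, by simp [hac.trans hcb], by simpa using fun _ hbc => hne (le_antisymm hcb hbc)⟩
    have := card_lt_card hsub
    omega

lemma mobiusP_of_ne {a b : Q} (hab : a ≠ b) :
    mobiusP Q a b = -∑ c ∈ univ.filter (fun c => a ≤ c ∧ c ≤ b ∧ c ≠ b), mobiusP Q a c := by
  have hcard : #(univ.filter fun c => a ≤ c ∧ c ≤ b) ≤ Fintype.card Q := card_le_univ _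
  rw [mobiusP, ← mobiusAux_succ_eq_of_card_le hcard, mobiusAux_succ, if_neg hab]
  rfl

lemma sum_mobiusP_left {a b : Q} (hab : a ≤ b) :
    ∑ c ∈ univ.filter (fun c => a ≤ c ∧ c ≤ b), mobiusP Q a c = if a = b then 1 else 0 := by
  split_ifs with h
  · subst h
    have : univ.filter (fun c => a ≤ c ∧ c ≤ a) = {a} := by
      ext c; simp [le_antisymm_iff, and_comm]
    simp [this, mobiusP, mobiusAux_self]
  · have : univ.filter (fun c => a ≤ c ∧ c ≤ b) =
        insert b (univ.filter fun c => a ≤ c ∧ c ≤ b ∧ c ≠ b) := by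
      ext c; by_cases c = b <;> simp_all
    rw [this, sum_insert (by simp), mobiusP_of_ne h, neg_add_cancel]

end Mobius

section Rank

variable {Q : Type*} [PartialOrder Q] [Fintype Q] {ρ : Q → ℕ}

lemma monotone_of_covBy_add_one (hcov : ∀ a b : Q, a ⋖ b → ρ b = ρ a + 1) : Monotone ρ := by
  let _ := Fintype.toLocallyFiniteOrder (α := Q)
  exact (monotone_iff_forall_covBy ρ).mpr fun a b h => (hcov a b h).symm ▸ Nat.le_succ _

lemma Monotone.le_of_forall_isMax (hmono : Monotone ρ) {n : ℕ} (hpure : ∀ a : Q, IsMax a → ρ a = n)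
    (a : Q) : ρ a ≤ n := by
  obtain ⟨m, ham, hm⟩ := Finite.exists_le_maximal (p := fun _ : Q => True) (a := a) trivial
  exact hpure m (maximal_true.mp hm) ▸ hmono ham

lemma exists_eq_of_le_of_covBy_add_one [OrderBot Q] (hbot : ρ ⊥ = 0)
    (hcov : ∀ a b : Q, a ⋖ b → ρ b = ρ a + 1) {n : ℕ} (hpure : ∀ a : Q, IsMax a → ρ a = n)
    {m : ℕ} (hm : m ≤ n) : ∃ a, ρ a = m := by
  let _ := Fintype.toLocallyFiniteOrder (α := Q)
  obtain ⟨t, -, ht⟩ := Finite.exists_le_maximal (p := fun _ : Q => True) (a := ⊥) trivial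
  rw [← hpure t (maximal_true.mp ht)] at hm
  clear ht
  -- the ranks along a saturated chain from `⊥` to `t` increase by steps of one
  induction le_iff_reflTransGen_covBy.mp (bot_le : ⊥ ≤ t) generalizing m with
  | refl => exact ⟨⊥, by omega⟩
  | @tail c d _ hcd ih =>
    rw [hcov c d hcd] at hm
    obtain hm | rfl := Nat.lt_or_eq_of_le hm
    · exact ih (Nat.lt_succ_iff.mp hm)
    · exact ⟨d, hcov c d hcd⟩

end Rank

section UpperWhitney

variable {R : Type*} [CommRing R] {Q Q' : Type*} [PartialOrder Q] [Fintype Q]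
  [PartialOrder Q'] [Fintype Q']

/-- `W_t` of the upper ideal `I_a`, ranked by `ρ - ρ a` and weighted by the restriction of `ϖ`. -/
noncomputable def WWhitneyFrom (ρ : Q → ℕ) (ϖ : Q → Q → R) (a : Q) (t : ℕ) : R :=
  ∑ b ∈ univ.filter (fun b => a ≤ b ∧ ρ b = ρ a + t), ϖ a b

lemma WWhitney_eq_WWhitneyFrom_bot [OrderBot Q] {ρ : Q → ℕ} (hbot : ρ ⊥ = 0)
    (ϖ : Q → Q → R) (t : ℕ) : WWhitney Q ρ ϖ t = WWhitneyFrom ρ ϖ ⊥ t := by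
  rw [WWhitney, finsum_mem_setOf_eq_sum_filter, WWhitneyFrom]
  simp [hbot]

lemma WWhitneyFrom_orderIso {ρ : Q → ℕ} {ϖ : Q → Q → R} {ρ' : Q' → ℕ} {ϖ' : Q' → Q' → R}
    {x : Q} (e : {y // x ≤ y} ≃o Q') (hϖ : ∀ z z', ϖ z.1 z'.1 = ϖ' (e z) (e z'))
    (hρ : ∀ z, ρ' (e z) = ρ z.1 - ρ x) (hmono : Monotone ρ) (u : {y // x ≤ y}) (t : ℕ) :
    WWhitneyFrom ρ ϖ u t = WWhitneyFrom ρ' ϖ' (e u) t := by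
  have hxu := hmono u.2
  refine sum_bij' (fun b hb => e ⟨b, u.2.trans (mem_filter.mp hb).2.1⟩)
    (fun b' _ => (e.symm b').1) (fun b hb => ?_) (fun b' hb' => ?_)
    (fun b _ => by simp) (fun b' _ => e.apply_symm_apply b') (fun b hb => hϖ u ⟨b, _⟩)
  · obtain ⟨hub, hb⟩ := (mem_filter.mp hb).2
    have hxb := hmono (u.2.trans hub)
    simp only [mem_filter, mem_univ, true_and, e.le_iff_le, hρ]
    exact ⟨hub, by omega⟩
  · obtain ⟨hub', hb'⟩ := (mem_filter.mp hb').2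
    have hxb := hmono (e.symm b').2
    rw [← e.le_symm_apply] at hub'
    rw [← e.apply_symm_apply b', hρ, hρ] at hb'
    simp only [mem_filter, mem_univ, true_and]
    exact ⟨hub', by omega⟩

lemma WWhitneyFrom_eq_WWhitney_of_orderIso [OrderBot Q'] {ρ : Q → ℕ} {ϖ : Q → Q → R}
    {ρ' : Q' → ℕ} {ϖ' : Q' → Q' → R} {x : Q} (e : {y // x ≤ y} ≃o Q')
    (hϖ : ∀ z z', ϖ z.1 z'.1 = ϖ' (e z) (e z')) (hρ : ∀ z, ρ' (e z) = ρ z.1 - ρ x)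
    (hmono : Monotone ρ) (t : ℕ) : WWhitneyFrom ρ ϖ x t = WWhitney Q' ρ' ϖ' t := by
  have hbot : e ⟨x, le_rfl⟩ = ⊥ := le_bot_iff.mp (e.le_symm_apply.mp (e.symm ⊥).2)
  have hρbot : ρ' ⊥ = 0 := by rw [← hbot, hρ, Nat.sub_self]
  rw [WWhitney_eq_WWhitneyFrom_bot hρbot, ← hbot]
  exact WWhitneyFrom_orderIso e hϖ hρ hmono ⟨x, le_rfl⟩ t

end UpperWhitney

def IsUniform {R Q : Type*} [PartialOrder Q] (n : ℕ) (ρ : Q → ℕ) (ϖ : Q → Q → R)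
    (Pi : ℕ → Type*) [∀ i, PartialOrder (Pi i)] (ρi : ∀ i, Pi i → ℕ)
    (ϖi : ∀ i, Pi i → Pi i → R) : Prop :=
  ∀ x : Q, ∃ e : {y : Q // x ≤ y} ≃o Pi (n - ρ x),
    (∀ z z' : {y : Q // x ≤ y}, ϖ z.1 z'.1 = ϖi (n - ρ x) (e z) (e z')) ∧
    (∀ z : {y : Q // x ≤ y}, ρi (n - ρ x) (e z) = ρ z.1 - ρ x)

/-- Upper ideals of `P_i ≅ I_z` (where `ρ z = ℓ - i`) are upper ideals of `P`, so `P_i` inherits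
the uniformity of `P`. -/
lemma IsUniform.WWhitneyFrom_eq {R Q : Type*} [CommRing R] [PartialOrder Q] [Fintype Q]
    [OrderBot Q] {ℓ : ℕ} {ρ : Q → ℕ} {ϖ : Q → Q → R} {Pi : ℕ → Type*}
    [∀ i, PartialOrder (Pi i)] [∀ i, Fintype (Pi i)] [∀ i, OrderBot (Pi i)]
    {ρi : ∀ i, Pi i → ℕ} {ϖi : ∀ i, Pi i → Pi i → R}
    (huni : IsUniform ℓ ρ ϖ Pi ρi ϖi) (hbot : ρ ⊥ = 0) (hcov : ∀ a b : Q, a ⋖ b → ρ b = ρ a + 1)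
    (hpure : ∀ a : Q, IsMax a → ρ a = ℓ) {i : ℕ} (hi : i ≤ ℓ) (a : Pi i) (t : ℕ) :
    WWhitneyFrom (ρi i) (ϖi i) a t = WWhitney (Pi (i - ρi i a)) (ρi _) (ϖi _) t := by
  have hmono := monotone_of_covBy_add_one hcov
  obtain ⟨z, hz⟩ := exists_eq_of_le_of_covBy_add_one hbot hcov hpure (Nat.sub_le ℓ i)
  have huni_z := huni z
  rw [show ℓ - ρ z = i by omega] at huni_z
  obtain ⟨e, hϖe, hρe⟩ := huni_z
  set x := e.symm a
  obtain ⟨e', hϖe', hρe'⟩ := huni x.1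
  have hρa : ρi i a = ρ x.1 - ρ z := by rw [← hρe, e.apply_symm_apply]
  have hrank : ℓ - ρ x.1 = i - ρi i a := by
    have := hmono x.2
    have := hmono.le_of_forall_isMax hpure x.1
    omega
  rw [← e.apply_symm_apply a, ← WWhitneyFrom_orderIso e hϖe hρe hmono,
    WWhitneyFrom_eq_WWhitney_of_orderIso e' hϖe' hρe' hmono, e.apply_symm_apply, hrank]

section Row

variable {R : Type*} [CommRing R] {Q : Type*} [PartialOrder Q] [Fintype Q] [OrderBot Q]
  {ρ : Q → ℕ} {ϖ : Q → Q → R}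

lemma sum_mobiusP_smul_mul_WWhitneyFrom (hbot : ρ ⊥ = 0) (hmono : Monotone ρ) (hϖ1 : ϖ ⊥ ⊥ = 1)
    (hϖm : ∀ a b c : Q, a ≤ b → b ≤ c → ϖ a c = ϖ a b * ϖ b c) (m : ℕ) :
    ∑ a ∈ univ.filter (fun a => ρ a ≤ m), mobiusP Q ⊥ a • ϖ ⊥ a * WWhitneyFrom ρ ϖ a (m - ρ a)
      = if m = 0 then 1 else 0 := by
  calc _ = ∑ a ∈ univ.filter (fun a => ρ a ≤ m),
          ∑ b ∈ univ.filter (fun b => a ≤ b ∧ ρ b = m), mobiusP Q ⊥ a • ϖ ⊥ b := by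
        refine sum_congr rfl fun a ha => ?_
        have ham := (mem_filter.mp ha).2
        rw [WWhitneyFrom, mul_sum]
        refine sum_congr (filter_congr fun b _ => by rw [Nat.add_sub_cancel' ham]) fun b hb => ?_
        rw [smul_mul_assoc, ← hϖm ⊥ a b bot_le (mem_filter.mp hb).2.1]
    _ = ∑ b ∈ univ.filter (fun b => ρ b = m),
          ∑ a ∈ univ.filter (fun a => ⊥ ≤ a ∧ a ≤ b), mobiusP Q ⊥ a • ϖ ⊥ b := by
        refine sum_comm' fun a b => ?_
        simp only [mem_filter, mem_univ, true_and, bot_le]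
        exact ⟨fun ⟨_, hab, hb⟩ => ⟨hab, hb⟩, fun ⟨hab, hb⟩ => ⟨hb ▸ hmono hab, hab, hb⟩⟩
    _ = ∑ b ∈ univ.filter (fun b => ρ b = m), if ⊥ = b then ϖ ⊥ b else 0 := by
        refine sum_congr rfl fun b _ => ?_
        rw [← sum_smul, sum_mobiusP_left bot_le]
        split_ifs <;> simp
    _ = if m = 0 then 1 else 0 := by
        rw [sum_ite_eq, hϖ1]
        simp [hbot, eq_comm]

variable {n : ℕ} {Pi : ℕ → Type*} [∀ i, PartialOrder (Pi i)] [∀ i, Fintype (Pi i)]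
  [∀ i, OrderBot (Pi i)] {ρi : ∀ i, Pi i → ℕ} {ϖi : ∀ i, Pi i → Pi i → R}

lemma sum_Icc_wWhitney_mul_WWhitney_eq_sum (hle : ∀ a, ρ a ≤ n)
    (hW : ∀ a t, WWhitneyFrom ρ ϖ a t = WWhitney (Pi (n - ρ a)) (ρi _) (ϖi _) t)
    {j : ℕ} (hj : j ≤ n) :
    ∑ k ∈ Icc j n, wWhitney Q ρ ϖ (n - k) * WWhitney (Pi k) (ρi k) (ϖi k) (k - j)
      = ∑ a ∈ univ.filter (fun a => ρ a ≤ n - j),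
          mobiusP Q ⊥ a • ϖ ⊥ a * WWhitneyFrom ρ ϖ a (n - j - ρ a) := by
  rw [← sum_fiberwise_of_maps_to (g := fun a => n - ρ a) (t := Icc j n)
    fun a ha => by simp only [mem_filter, mem_univ, true_and, mem_Icc] at ha ⊢; omega]
  refine sum_congr rfl fun k hk => ?_
  rw [wWhitney, finsum_mem_setOf_eq_sum_filter, sum_mul, filter_filter]
  have hk := mem_Icc.mp hk
  refine sum_congr (filter_congr fun a _ => by have := hle a; omega) fun a ha => ?_
  obtain rfl : k = n - ρ a := by have := hle a; have := (mem_filter.mp ha).2; omega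
  rw [hW]
  congr 2
  omega

lemma sum_Icc_wWhitney_mul_WWhitney (hbot : ρ ⊥ = 0) (hmono : Monotone ρ) (hle : ∀ a, ρ a ≤ n)
    (hϖ1 : ϖ ⊥ ⊥ = 1) (hϖm : ∀ a b c : Q, a ≤ b → b ≤ c → ϖ a c = ϖ a b * ϖ b c)
    (hW : ∀ a t, WWhitneyFrom ρ ϖ a t = WWhitney (Pi (n - ρ a)) (ρi _) (ϖi _) t) (j : ℕ) :
    ∑ k ∈ Icc j n, wWhitney Q ρ ϖ (n - k) * WWhitney (Pi k) (ρi k) (ϖi k) (k - j)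
      = if n = j then 1 else 0 := by
  rcases le_or_gt j n with hj | hj
  · rw [sum_Icc_wWhitney_mul_WWhitney_eq_sum hle hW hj,
      sum_mobiusP_smul_mul_WWhitneyFrom hbot hmono hϖ1 hϖm]
    exact if_congr (by omega) rfl rfl
  · rw [Icc_eq_empty_of_lt hj, sum_empty, if_neg hj.ne]

end Row

lemma lowerTriangular_mul_apply {R : Type*} [NonUnitalNonAssocSemiring R] {N : ℕ}
    (f g : ℕ → ℕ → R) (i j : Fin N) :
    ((Matrix.of fun i j : Fin N => if (j : ℕ) ≤ i then f i j else 0) *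
        Matrix.of fun i j : Fin N => if (j : ℕ) ≤ i then g i j else 0) i j =
      ∑ k ∈ Icc (j : ℕ) i, f i k * g k j := by
  simp only [Matrix.mul_apply, Matrix.of_apply, ite_zero_mul_ite_zero]
  rw [Fin.sum_univ_eq_sum_range (fun k => if k ≤ i ∧ j ≤ k then f i k * g k j else 0),
    ← sum_filter]
  exact sum_congr (by ext k; simp only [mem_filter, mem_range, mem_Icc]; omega) fun _ _ => rfl

theorem uniform_whitney_matrices_inverse_general
    {R : Type*} [CommRing R] (ℓ : ℕ)
    (P : Type*) [PartialOrder P] [Fintype P] [OrderBot P]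
    (ρ : P → ℕ) (hρbot : ρ ⊥ = 0) (hρcov : ∀ a b : P, a ⋖ b → ρ b = ρ a + 1)
    (hpure : ∀ a : P, IsMax a → ρ a = ℓ)
    (ϖ : P → P → R)
    (Pi : ℕ → Type*) [instPO : ∀ i, PartialOrder (Pi i)] [instFT : ∀ i, Fintype (Pi i)]
    [instOB : ∀ i, OrderBot (Pi i)]
    (ρi : ∀ i, Pi i → ℕ) (hρi0 : ∀ i, ρi i ⊥ = 0)
    (hρicov : ∀ i, ∀ a b : Pi i, a ⋖ b → ρi i b = ρi i a + 1)
    (hpurei : ∀ i, ∀ a : Pi i, IsMax a → ρi i a = i)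
    (ϖi : ∀ i, Pi i → Pi i → R) (hϖi1 : ∀ i, ∀ a : Pi i, ϖi i a a = 1)
    (hϖim : ∀ i, ∀ a b c : Pi i, a ≤ b → b ≤ c → ϖi i a c = ϖi i a b * ϖi i b c)
    (huni : ∀ x : P, ∃ e : {y : P // x ≤ y} ≃o Pi (ℓ - ρ x),
      (∀ z z' : {y : P // x ≤ y}, ϖ z.1 z'.1 = ϖi (ℓ - ρ x) (e z) (e z')) ∧
      (∀ z : {y : P // x ≤ y}, ρi (ℓ - ρ x) (e z) = ρ z.1 - ρ x)) :
    (Matrix.of fun i j : Fin (ℓ + 1) =>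
        if (j : ℕ) ≤ (i : ℕ) then wWhitney (Pi i) (ρi i) (ϖi i) ((i : ℕ) - j) else 0) *
      (Matrix.of fun i j : Fin (ℓ + 1) =>
        if (j : ℕ) ≤ (i : ℕ) then WWhitney (Pi i) (ρi i) (ϖi i) ((i : ℕ) - j) else 0) = 1 ∧
    (Matrix.of fun i j : Fin (ℓ + 1) =>
        if (j : ℕ) ≤ (i : ℕ) then WWhitney (Pi i) (ρi i) (ϖi i) ((i : ℕ) - j) else 0) *
      (Matrix.of fun i j : Fin (ℓ + 1) =>
        if (j : ℕ) ≤ (i : ℕ) then wWhitney (Pi i) (ρi i) (ϖi i) ((i : ℕ) - j) else 0) = 1 := by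
  have hmonoi : ∀ i, Monotone (ρi i) := fun i => monotone_of_covBy_add_one (hρicov i)
  suffices hAB : _ from ⟨hAB, mul_eq_one_comm.mp hAB⟩
  ext i j
  rw [lowerTriangular_mul_apply (fun i k => wWhitney (Pi i) (ρi i) (ϖi i) (i - k))
    (fun k j => WWhitney (Pi k) (ρi k) (ϖi k) (k - j)),
    sum_Icc_wWhitney_mul_WWhitney (hρi0 i) (hmonoi i) ((hmonoi i).le_of_forall_isMax (hpurei i))
      (hϖi1 i ⊥) (hϖim i) (IsUniform.WWhitneyFrom_eq huni hρbot hρcov hpure i.is_le),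
    Matrix.one_apply]
  simp [Fin.ext_iff]

/-- Let `P` be a finite pure poset of length `ℓ` with minimum element `⊥` and rank
function `ρ`, uniform with associated uniform sequence `(P_0,…,P_ℓ)` (each upper
order ideal `I_x = {y // x ≤ y}` is isomorphic to `P_{ℓ - ρ(x)}`), and let `ϖ` be a
uniform `P`-compatible weight function with values in a commutative ring `R`,
inducing a `P_i`-compatible weight function `ϖᵢ` (and rank function `ρᵢ`) on each
`P_i` via the isomorphisms.  Then the matrices `[w_{i-j}(P_i,ϖᵢ)]_{0 ≤ i,j ≤ ℓ}`
and `[W_{i-j}(P_i,ϖᵢ)]_{0 ≤ i,j ≤ ℓ}` (with entries `0` for `j > i`) are inverses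
of each other over `R`. -/
theorem uniform_whitney_matrices_inverse
    {R : Type*} [CommRing R] (ℓ : ℕ)
    (P : Type*) [PartialOrder P] [Fintype P] [OrderBot P]
    (ρ : P → ℕ) (hρbot : ρ ⊥ = 0) (hρcov : ∀ a b : P, a ⋖ b → ρ b = ρ a + 1)
    (hpure : ∀ a : P, IsMax a → ρ a = ℓ)
    (ϖ : P → P → R) (hϖ1 : ∀ a : P, ϖ a a = 1)
    (hϖm : ∀ a b c : P, a ≤ b → b ≤ c → ϖ a c = ϖ a b * ϖ b c)
    (Pi : ℕ → Type*) [instPO : ∀ i, PartialOrder (Pi i)] [instFT : ∀ i, Fintype (Pi i)]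
    [instOB : ∀ i, OrderBot (Pi i)]
    (ρi : ∀ i, Pi i → ℕ) (hρi0 : ∀ i, ρi i ⊥ = 0)
    (hρicov : ∀ i, ∀ a b : Pi i, a ⋖ b → ρi i b = ρi i a + 1)
    (hpurei : ∀ i, ∀ a : Pi i, IsMax a → ρi i a = i)
    (ϖi : ∀ i, Pi i → Pi i → R) (hϖi1 : ∀ i, ∀ a : Pi i, ϖi i a a = 1)
    (hϖim : ∀ i, ∀ a b c : Pi i, a ≤ b → b ≤ c → ϖi i a c = ϖi i a b * ϖi i b c)
    (huni : ∀ x : P, ∃ e : {y : P // x ≤ y} ≃o Pi (ℓ - ρ x),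
      (∀ z z' : {y : P // x ≤ y}, ϖ z.1 z'.1 = ϖi (ℓ - ρ x) (e z) (e z')) ∧
      (∀ z : {y : P // x ≤ y}, ρi (ℓ - ρ x) (e z) = ρ z.1 - ρ x)) :
    (Matrix.of fun i j : Fin (ℓ + 1) =>
        if (j : ℕ) ≤ (i : ℕ) then wWhitney (Pi i) (ρi i) (ϖi i) ((i : ℕ) - j) else 0) *
      (Matrix.of fun i j : Fin (ℓ + 1) =>
        if (j : ℕ) ≤ (i : ℕ) then WWhitney (Pi i) (ρi i) (ϖi i) ((i : ℕ) - j) else 0) = 1 ∧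
    (Matrix.of fun i j : Fin (ℓ + 1) =>
        if (j : ℕ) ≤ (i : ℕ) then WWhitney (Pi i) (ρi i) (ϖi i) ((i : ℕ) - j) else 0) *
      (Matrix.of fun i j : Fin (ℓ + 1) =>
        if (j : ℕ) ≤ (i : ℕ) then wWhitney (Pi i) (ρi i) (ϖi i) ((i : ℕ) - j) else 0) = 1 :=
  uniform_whitney_matrices_inverse_general ℓ P ρ hρbot hρcov hpure ϖ Pi (instPO := instPO)
    (instFT := instFT) (instOB := instOB) ρi hρi0 hρicov hpurei ϖi hϖi1 hϖim huni
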